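/- Combining the three regions, there exists an absolute constant C > 0 such that for every ρ > 0 and every w ∈ ℝ³ with 0 < |w| < ρ/2, ∫_{B_ρ ∩ {z₃>0}} |z|^{-1}|z−w|^{-2} dz ≤ C (1 + ln(ρ/|w|)). -/

import Mathlib

/-!
Drop the half-space condition and, with `b = ‖w‖ / 2`, split the ball of radius `ρ` into
`B(0, b)`, `B(w, b)` and the rest. On `B(0, b)` the factor `‖z - w‖⁻²` is at most `b⁻²`, on
`B(w, b)` the factor `‖z‖⁻¹` is at most `b⁻¹`, and on the rest the kernel is at most
`‖z‖⁻³ + ‖z - w‖⁻³`. In polar coordinates the first two pieces are bounded by absolute constants,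
while `‖·‖⁻³` integrates to `3 |B₁| log (R / b)` over an annulus `b ≤ r < R`; this is the source
of the logarithm.
-/

open MeasureTheory Metric Set
open scoped ENNReal

section PolarCoordinates

variable {E : Type*} [NormedAddCommGroup E] [NormedSpace ℝ E] [FiniteDimensional ℝ E]
  [MeasurableSpace E] [BorelSpace E] (μ : Measure E) [μ.IsAddHaarMeasure]

theorem lintegral_comp_norm_addHaar [Nontrivial E] {f : ℝ → ℝ≥0∞} (hf : Measurable f) :
    ∫⁻ x, f ‖x‖ ∂μ = Module.finrank ℝ E * μ (ball 0 1) *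
      ∫⁻ y in Ioi (0 : ℝ), ENNReal.ofReal (y ^ (Module.finrank ℝ E - 1)) * f y := by
  calc ∫⁻ x, f ‖x‖ ∂μ
        = ∫⁻ x : ({0}ᶜ : Set E), f ‖x.1‖ ∂(μ.comap (↑)) := by
        rw [lintegral_subtype_comap (measurableSet_singleton _).compl (fun x => f ‖x‖),
          restrict_compl_singleton]
    _ = ∫⁻ x, f x.2 ∂μ.toSphere.prod (.volumeIoiPow (Module.finrank ℝ E - 1)) := by
        simpa using μ.measurePreserving_homeomorphUnitSphereProd.lintegral_comp_emb
          (Homeomorph.measurableEmbedding _) (f ∘ Subtype.val ∘ Prod.snd)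
    _ = μ.toSphere univ *
          ∫⁻ x : Ioi (0 : ℝ), f x ∂.volumeIoiPow (Module.finrank ℝ E - 1) := by
        rw [lintegral_prod (fun x : sphere (0 : E) 1 × Ioi (0 : ℝ) => f x.2)
          (hf.comp (measurable_subtype_coe.comp measurable_snd)).aemeasurable]
        simp [mul_comm]
    _ = _ := by
        rw [Measure.toSphere_apply_univ, Measure.volumeIoiPow,
          lintegral_withDensity_eq_lintegral_mul _ (by fun_prop)
            (g := fun x : Ioi (0 : ℝ) => f x) (hf.comp measurable_subtype_coe),
          ← lintegral_subtype_comap measurableSet_Ioi]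
        rfl

theorem setLIntegral_comp_norm_sub_addHaar [Nontrivial E] {f : ℝ → ℝ≥0∞}
    (hf : Measurable f) {s : Set ℝ} (hs : MeasurableSet s) (x : E) :
    ∫⁻ z in {z | ‖z - x‖ ∈ s}, f ‖z - x‖ ∂μ = Module.finrank ℝ E * μ (ball 0 1) *
      ∫⁻ y in s ∩ Ioi 0, ENNReal.ofReal (y ^ (Module.finrank ℝ E - 1)) * f y := by
  have hpre : MeasurableSet {z : E | ‖z - x‖ ∈ s} := hs.preimage (by fun_prop)
  calc ∫⁻ z in {z | ‖z - x‖ ∈ s}, f ‖z - x‖ ∂μ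
        = ∫⁻ z, s.indicator f ‖z - x‖ ∂μ := by
        rw [← lintegral_indicator hpre]
        rfl
    _ = ∫⁻ z, s.indicator f ‖z‖ ∂μ :=
        lintegral_sub_right_eq_self (fun z => s.indicator f ‖z‖) x
    _ = _ := by
        rw [lintegral_comp_norm_addHaar μ (hf.indicator hs), ← Measure.restrict_restrict hs,
          ← lintegral_indicator hs]
        simp only [indicator_mul_right]

theorem setLIntegral_Ioo_pow {r : ℝ} (hr : 0 ≤ r) (n : ℕ) :
    ∫⁻ y in Ioo 0 r, ENNReal.ofReal (y ^ n) = ENNReal.ofReal (r ^ (n + 1) / (n + 1)) := by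
  rw [Measure.restrict_congr_set Ioo_ae_eq_Ioc,
    ← ofReal_integral_eq_lintegral_ofReal (intervalIntegral.intervalIntegrable_pow _).1,
    ← intervalIntegral.integral_of_le hr]
  · simp
  · filter_upwards [ae_restrict_mem measurableSet_Ioc] with y hy
    exact pow_nonneg hy.1.le _

theorem setLIntegral_Ico_inv {b R : ℝ} (hb : 0 < b) (hbR : b ≤ R) :
    ∫⁻ y in Ico b R, ENNReal.ofReal y⁻¹ = ENNReal.ofReal (Real.log (R / b)) := by
  have hint : IntervalIntegrable (fun y : ℝ => y⁻¹) volume b R :=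
    intervalIntegral.intervalIntegrable_inv
      (fun y hy => (lt_of_lt_of_le (lt_min hb (hb.trans_le hbR)) hy.1).ne') continuousOn_id
  rw [Measure.restrict_congr_set Ico_ae_eq_Ioc, ← ofReal_integral_eq_lintegral_ofReal hint.1,
    ← intervalIntegral.integral_of_le hbR, integral_inv_of_pos hb (hb.trans_le hbR)]
  filter_upwards [ae_restrict_mem measurableSet_Ioc] with y hy
  exact inv_nonneg.2 (hb.trans hy.1).le

theorem setLIntegral_ball_inv_norm_sub_pow {k : ℕ} (hk : k < Module.finrank ℝ E) (x : E)
    {r : ℝ} (hr : 0 ≤ r) :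
    ∫⁻ z in ball x r, ENNReal.ofReal ((‖z - x‖ ^ k)⁻¹) ∂μ = μ (ball 0 1) *
      ENNReal.ofReal (Module.finrank ℝ E * r ^ (Module.finrank ℝ E - k) /
        (Module.finrank ℝ E - k : ℕ)) := by
  have : Nontrivial E := Module.nontrivial_of_finrank_pos (k.zero_le.trans_lt hk)
  obtain ⟨n, hn⟩ : ∃ n, Module.finrank ℝ E = k + n + 1 :=
    ⟨Module.finrank ℝ E - k - 1, by omega⟩
  have hball : ball x r = {z | ‖z - x‖ ∈ Iio r} := by ext; simp [dist_eq_norm]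
  rw [hball]
  refine (setLIntegral_comp_norm_sub_addHaar μ (f := fun y => ENNReal.ofReal ((y ^ k)⁻¹))
    (by fun_prop) measurableSet_Iio x).trans ?_
  rw [Iio_inter_Ioi,
    setLIntegral_congr_fun measurableSet_Ioo (g := fun y => ENNReal.ofReal (y ^ n)),
    setLIntegral_Ioo_pow hr, mul_div_assoc, ENNReal.ofReal_mul (Nat.cast_nonneg _),
    ENNReal.ofReal_natCast, hn, show k + n + 1 - k = n + 1 by omega]
  · push_cast; ring
  · intro y hy
    dsimp only
    rw [← ENNReal.ofReal_mul (pow_pos hy.1 _).le, hn, show k + n + 1 - 1 = k + n by omega,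
      pow_add, mul_right_comm, mul_inv_cancel₀ (pow_pos hy.1 k).ne', one_mul]

theorem setLIntegral_annulus_inv_norm_sub_pow_finrank [Nontrivial E] (x : E) {b R : ℝ}
    (hb : 0 < b) (hbR : b ≤ R) :
    ∫⁻ z in {z | b ≤ ‖z - x‖ ∧ ‖z - x‖ < R},
        ENNReal.ofReal ((‖z - x‖ ^ Module.finrank ℝ E)⁻¹) ∂μ =
      μ (ball 0 1) * ENNReal.ofReal (Module.finrank ℝ E * Real.log (R / b)) := by
  refine (setLIntegral_comp_norm_sub_addHaar μ
    (f := fun y => ENNReal.ofReal ((y ^ Module.finrank ℝ E)⁻¹)) (by fun_prop)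
    (measurableSet_Ico (a := b) (b := R)) x).trans ?_
  have hIco : Ico b R ∩ Ioi 0 = Ico b R :=
    inter_eq_left.2 fun y hy => mem_Ioi.2 (hb.trans_le hy.1)
  rw [hIco, setLIntegral_congr_fun measurableSet_Ico (g := fun y => ENNReal.ofReal y⁻¹),
    setLIntegral_Ico_inv hb hbR, ENNReal.ofReal_mul (Nat.cast_nonneg _), ENNReal.ofReal_natCast]
  · ring
  intro y hy
  obtain ⟨m, hm⟩ := Nat.exists_eq_add_one.2 (Module.finrank_pos (R := ℝ) (M := E))
  dsimp only
  rw [← ENNReal.ofReal_mul (pow_pos (hb.trans_le hy.1) _).le, hm, Nat.add_sub_cancel, pow_succ,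
    mul_inv, ← mul_assoc, mul_inv_cancel₀ (pow_pos (hb.trans_le hy.1) _).ne', one_mul]

end PolarCoordinates

theorem inv_mul_inv_sq_le_inv_pow_three_add {a c : ℝ} (ha : 0 < a) (hc : 0 < c) :
    a⁻¹ * (c ^ 2)⁻¹ ≤ (a ^ 3)⁻¹ + (c ^ 3)⁻¹ := by
  rcases le_total a c with h | h
  · calc a⁻¹ * (c ^ 2)⁻¹ ≤ a⁻¹ * (a ^ 2)⁻¹ := by gcongr
      _ = (a ^ 3)⁻¹ := by ring
      _ ≤ _ := le_add_of_nonneg_right (by positivity)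
  · calc a⁻¹ * (c ^ 2)⁻¹ ≤ c⁻¹ * (c ^ 2)⁻¹ := by gcongr
      _ = (c ^ 3)⁻¹ := by ring
      _ ≤ _ := le_add_of_nonneg_left (by positivity)

theorem log_two_mul_add_log_four_mul_le {x : ℝ} (hx : 1 ≤ x) :
    3 / 2 + 3 + (3 * Real.log (2 * x) + 3 * Real.log (4 * x)) ≤ 12 * (1 + Real.log x) := by
  have hx₀ : x ≠ 0 := (zero_lt_one.trans_le hx).ne'
  rw [Real.log_mul two_ne_zero hx₀, Real.log_mul four_ne_zero hx₀,
    show (4 : ℝ) = 2 ^ 2 by norm_num, Real.log_pow]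
  linarith [Real.log_two_lt_d9, Real.log_nonneg hx]

section SingularKernel

variable {E : Type*} [NormedAddCommGroup E]

noncomputable def singularKernel (w z : E) : ℝ := ‖z‖⁻¹ * (‖z - w‖ ^ 2)⁻¹

@[fun_prop]
theorem measurable_singularKernel [MeasurableSpace E] [BorelSpace E] (w : E) :
    Measurable (singularKernel w) := by
  unfold singularKernel; fun_prop

variable [NormedSpace ℝ E] [FiniteDimensional ℝ E] [MeasurableSpace E] [BorelSpace E]
  {μ : Measure E} [μ.IsAddHaarMeasure] (hE : Module.finrank ℝ E = 3) {w : E} {b : ℝ}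
include hE

theorem setLIntegral_ball_zero_singularKernel_le (hb : 0 < b) (hbw : 2 * b ≤ ‖w‖) :
    ∫⁻ z in ball 0 b, ENNReal.ofReal (singularKernel w z) ∂μ ≤
      μ (ball 0 1) * ENNReal.ofReal (3 / 2) := by
  calc ∫⁻ z in ball 0 b, ENNReal.ofReal (singularKernel w z) ∂μ
      ≤ ∫⁻ z in ball 0 b,
          ENNReal.ofReal ((b ^ 2)⁻¹) * ENNReal.ofReal ((‖z - 0‖ ^ 1)⁻¹) ∂μ := by
        refine setLIntegral_mono (by fun_prop) fun z hz => ?_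
        have hz' : ‖z‖ < b := mem_ball_zero_iff.1 hz
        have hzw : b ≤ ‖z - w‖ := by linarith [norm_sub_norm_le w z, norm_sub_rev w z]
        rw [← ENNReal.ofReal_mul (by positivity), sub_zero, pow_one, mul_comm]
        unfold singularKernel
        gcongr
    _ = μ (ball 0 1) * ENNReal.ofReal (3 / 2) := by
        rw [lintegral_const_mul _ (by fun_prop),
          setLIntegral_ball_inv_norm_sub_pow μ (by omega) 0 hb.le, hE, mul_left_comm,
          ← ENNReal.ofReal_mul (by positivity)]
        congr 2
        field_simp
        ring

theorem setLIntegral_ball_singularKernel_le (hb : 0 < b) (hbw : 2 * b ≤ ‖w‖) :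
    ∫⁻ z in ball w b, ENNReal.ofReal (singularKernel w z) ∂μ ≤
      μ (ball 0 1) * ENNReal.ofReal 3 := by
  calc ∫⁻ z in ball w b, ENNReal.ofReal (singularKernel w z) ∂μ
      ≤ ∫⁻ z in ball w b, ENNReal.ofReal b⁻¹ * ENNReal.ofReal ((‖z - w‖ ^ 2)⁻¹) ∂μ := by
        refine setLIntegral_mono (by fun_prop) fun z hz => ?_
        have hz' : ‖z - w‖ < b := mem_ball_iff_norm.1 hz
        have hzw : b ≤ ‖z‖ := by linarith [norm_sub_norm_le w z, norm_sub_rev w z]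
        rw [← ENNReal.ofReal_mul (by positivity)]
        unfold singularKernel
        gcongr
    _ = μ (ball 0 1) * ENNReal.ofReal 3 := by
        rw [lintegral_const_mul _ (by fun_prop),
          setLIntegral_ball_inv_norm_sub_pow μ (by omega) w hb.le, hE, mul_left_comm,
          ← ENNReal.ofReal_mul (by positivity)]
        congr 2
        field_simp
        ring

theorem setLIntegral_far_singularKernel_le {ρ : ℝ} (hb : 0 < b) (hbρ : b ≤ ρ)
    (hwρ : ‖w‖ ≤ ρ) :
    ∫⁻ z in {z | b ≤ ‖z‖ ∧ ‖z‖ < ρ ∧ b ≤ ‖z - w‖}, ENNReal.ofReal (singularKernel w z) ∂μ ≤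
      μ (ball 0 1) * ENNReal.ofReal (3 * Real.log (ρ / b) + 3 * Real.log (2 * ρ / b)) := by
  have : Nontrivial E := Module.nontrivial_of_finrank_eq_succ hE
  set F := {z : E | b ≤ ‖z‖ ∧ ‖z‖ < ρ ∧ b ≤ ‖z - w‖}
  have hF₀ : F ⊆ {z | b ≤ ‖z - 0‖ ∧ ‖z - 0‖ < ρ} := fun z hz => by
    show b ≤ ‖z - 0‖ ∧ ‖z - 0‖ < ρ
    rw [sub_zero]
    exact ⟨hz.1, hz.2.1⟩
  have hFw : F ⊆ {z | b ≤ ‖z - w‖ ∧ ‖z - w‖ < 2 * ρ} := fun z hz =>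
    ⟨hz.2.2, by linarith [norm_sub_le z w, hz.2.1]⟩
  have h₀ := setLIntegral_annulus_inv_norm_sub_pow_finrank μ 0 hb hbρ
  have hw := setLIntegral_annulus_inv_norm_sub_pow_finrank μ w hb (R := 2 * ρ) (by linarith)
  rw [hE, Nat.cast_ofNat] at h₀ hw
  calc ∫⁻ z in F, ENNReal.ofReal (singularKernel w z) ∂μ
      ≤ ∫⁻ z in F,
          (ENNReal.ofReal ((‖z - 0‖ ^ 3)⁻¹) + ENNReal.ofReal ((‖z - w‖ ^ 3)⁻¹)) ∂μ := by
        refine setLIntegral_mono (by fun_prop) fun z hz => ?_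
        rw [← ENNReal.ofReal_add (by positivity) (by positivity), sub_zero]
        exact ENNReal.ofReal_le_ofReal (inv_mul_inv_sq_le_inv_pow_three_add
          (hb.trans_le hz.1) (hb.trans_le hz.2.2))
    _ = ∫⁻ z in F, ENNReal.ofReal ((‖z - 0‖ ^ 3)⁻¹) ∂μ +
          ∫⁻ z in F, ENNReal.ofReal ((‖z - w‖ ^ 3)⁻¹) ∂μ := lintegral_add_left (by fun_prop) _
    _ ≤ μ (ball 0 1) * ENNReal.ofReal (3 * Real.log (ρ / b)) +
          μ (ball 0 1) * ENNReal.ofReal (3 * Real.log (2 * ρ / b)) := by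
        rw [← h₀, ← hw]
        exact add_le_add (lintegral_mono_set hF₀) (lintegral_mono_set hFw)
    _ = _ := by
        have hlog₀ : 0 ≤ Real.log (ρ / b) := Real.log_nonneg ((one_le_div hb).2 hbρ)
        have hlogw : 0 ≤ Real.log (2 * ρ / b) :=
          Real.log_nonneg ((one_le_div hb).2 (by linarith))
        rw [← mul_add, ← ENNReal.ofReal_add (by positivity) (by positivity)]

theorem setLIntegral_ball_singularKernel_le_log {ρ : ℝ} (hw : 0 < ‖w‖) (hwρ : ‖w‖ < ρ / 2) :
    ∫⁻ z in ball 0 ρ, ENNReal.ofReal (singularKernel w z) ∂μ ≤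
      μ (ball 0 1) * ENNReal.ofReal (12 * (1 + Real.log (ρ / ‖w‖))) := by
  set b := ‖w‖ / 2 with hb_def
  have hb : 0 < b := by positivity
  have hbw : 2 * b ≤ ‖w‖ := by linarith
  have hlog₀ : 0 ≤ Real.log (ρ / b) := Real.log_nonneg ((one_le_div hb).2 (by linarith))
  have hlogw : 0 ≤ Real.log (2 * ρ / b) := Real.log_nonneg ((one_le_div hb).2 (by linarith))
  have hcover : ball 0 ρ ⊆ ball 0 b ∪ ball w b ∪ {z | b ≤ ‖z‖ ∧ ‖z‖ < ρ ∧ b ≤ ‖z - w‖} := by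
    intro z hz
    by_cases h₀ : ‖z‖ < b
    · exact .inl (.inl (mem_ball_zero_iff.2 h₀))
    by_cases hw : ‖z - w‖ < b
    · exact .inl (.inr (mem_ball_iff_norm.2 hw))
    exact .inr ⟨not_lt.1 h₀, mem_ball_zero_iff.1 hz, not_lt.1 hw⟩
  calc ∫⁻ z in ball 0 ρ, ENNReal.ofReal (singularKernel w z) ∂μ
      ≤ ∫⁻ z in ball 0 b, ENNReal.ofReal (singularKernel w z) ∂μ +
          ∫⁻ z in ball w b, ENNReal.ofReal (singularKernel w z) ∂μ +
          ∫⁻ z in {z | b ≤ ‖z‖ ∧ ‖z‖ < ρ ∧ b ≤ ‖z - w‖}, ENNReal.ofReal (singularKernel w z) ∂μ :=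
        (lintegral_mono_set hcover).trans <|
          (lintegral_union_le _ _ _).trans (by gcongr; exact lintegral_union_le _ _ _)
    _ ≤ μ (ball 0 1) * ENNReal.ofReal (3 / 2) + μ (ball 0 1) * ENNReal.ofReal 3 +
          μ (ball 0 1) * ENNReal.ofReal (3 * Real.log (ρ / b) + 3 * Real.log (2 * ρ / b)) := by
        gcongr
        exacts [setLIntegral_ball_zero_singularKernel_le hE hb hbw,
          setLIntegral_ball_singularKernel_le hE hb hbw,
          setLIntegral_far_singularKernel_le hE hb (by linarith) (by linarith)]
    _ ≤ μ (ball 0 1) * ENNReal.ofReal (12 * (1 + Real.log (ρ / ‖w‖))) := by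
        rw [← mul_add, ← mul_add, ← ENNReal.ofReal_add (by norm_num) (by norm_num),
          ← ENNReal.ofReal_add (by norm_num) (by positivity),
          show ρ / b = 2 * (ρ / ‖w‖) by rw [hb_def]; field_simp,
          show 2 * ρ / b = 4 * (ρ / ‖w‖) by rw [hb_def]; field_simp; ring]
        gcongr
        exact log_two_mul_add_log_four_mul_le ((one_le_div hw).2 (by linarith))

end SingularKernel

theorem singular_integral_halfball_log_bound :
    ∃ C : ℝ, 0 < C ∧
      ∀ (ρ : ℝ) (w : EuclideanSpace ℝ (Fin 3)), 0 < ρ → 0 < ‖w‖ → ‖w‖ < ρ / 2 →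
        (∫ z in {z : EuclideanSpace ℝ (Fin 3) | ‖z‖ < ρ ∧ 0 < z 2},
            ‖z‖⁻¹ * (‖z - w‖ ^ 2)⁻¹) ≤ C * (1 + Real.log (ρ / ‖w‖)) := by
  set v := volume (ball (0 : EuclideanSpace ℝ (Fin 3)) 1)
  have hv : v ≠ ⊤ := measure_ball_lt_top.ne
  have hv_pos : 0 < v.toReal := ENNReal.toReal_pos (measure_ball_pos _ _ one_pos).ne' hv
  refine ⟨12 * v.toReal, by positivity, fun ρ w _ hw hwρ => ?_⟩
  have hL : 0 ≤ Real.log (ρ / ‖w‖) := Real.log_nonneg ((one_le_div hw).2 (by linarith))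
  have hhalf : {z : EuclideanSpace ℝ (Fin 3) | ‖z‖ < ρ ∧ 0 < z 2} ⊆ ball 0 ρ :=
    fun z hz => mem_ball_zero_iff.2 hz.1
  change ∫ z in _, singularKernel w z ≤ _
  rw [integral_eq_lintegral_of_nonneg_ae
    (ae_of_all _ fun z => by unfold singularKernel; positivity)
    (measurable_singularKernel w).aestronglyMeasurable]
  refine ENNReal.toReal_le_of_le_ofReal (by positivity) ?_
  calc ∫⁻ z in {z | ‖z‖ < ρ ∧ 0 < z 2}, ENNReal.ofReal (singularKernel w z)
      ≤ ∫⁻ z in ball 0 ρ, ENNReal.ofReal (singularKernel w z) := lintegral_mono_set hhalf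
    _ ≤ v * ENNReal.ofReal (12 * (1 + Real.log (ρ / ‖w‖))) :=
        setLIntegral_ball_singularKernel_le_log finrank_euclideanSpace_fin hw hwρ
    _ = ENNReal.ofReal (12 * v.toReal * (1 + Real.log (ρ / ‖w‖))) := by
        rw [← ENNReal.ofReal_toReal hv, ← ENNReal.ofReal_mul hv_pos.le,
          ENNReal.toReal_ofReal hv_pos.le]
        ring_nf
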